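/- arXiv:2303.15615 — 2 statements merged into one kernel-verified Lean document; each statement's English description precedes it below -/
import Mathlib

section
/- For binary vectors e and v of length n, the identity 2^(wt(v)-1) · p_v(e) = sum over nonzero binary vectors u with supp(u) ⊆ supp(v) of (-1)^(wt(u)-1) · s_u(e) holds over the integers, where v is nonzero. -/
open Finset

/-- Hamming weight of a binary vector. -/
def wt {n : ℕ} (v : Fin n → ZMod 2) : ℕ := (univ.filter (fun i => v i = 1)).card

/-- `s_v(e)`: XOR over the support of `v` of the entries of `e`, viewed as an integer. -/
def sFun {n : ℕ} (v e : Fin n → ZMod 2) : ℤ :=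
  ((∑ i ∈ univ.filter (fun i => v i = 1), e i : ZMod 2)).val

/-- `p_v(e)`: product over the support of `v` of the entries of `e`, viewed as an integer. -/
def pFun {n : ℕ} (v e : Fin n → ZMod 2) : ℤ :=
  ∏ i ∈ univ.filter (fun i => v i = 1), ((e i).val : ℤ)

lemma two_mul_mod_two (m : ℕ) : (2 : ℤ) * ((m % 2 : ℕ) : ℤ) = 1 - (-1) ^ m := by
  rcases Nat.even_or_odd m with h | h
  · rw [Even.neg_one_pow h, Nat.even_iff.mp h]
    norm_num
  · rw [Odd.neg_one_pow h, Nat.odd_iff.mp h]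
    norm_num

lemma key {n : ℕ} (S T : Finset (Fin n)) (hS : S.Nonempty) :
    ∑ A ∈ S.powerset.filter (fun A => A ≠ ∅),
        (-1 : ℤ) ^ (A.card - 1) * (((A ∩ T).card % 2 : ℕ) : ℤ)
      = 2 ^ (S.card - 1) * (if S ⊆ T then 1 else 0) := by
  have h2 : (2 : ℤ) ≠ 0 := by norm_num
  apply mul_left_cancel₀ h2
  rw [Finset.mul_sum]
  have hcard : 1 ≤ S.card := Finset.card_pos.mpr hS
  have hrhs : (2 : ℤ) * (2 ^ (S.card - 1) * (if S ⊆ T then 1 else 0))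
      = 2 ^ S.card * (if S ⊆ T then 1 else 0) := by
    rw [← mul_assoc, ← pow_succ']
    congr 2
    omega
  rw [hrhs]
  -- rewrite each term
  have hterm : ∀ A ∈ S.powerset.filter (fun A => A ≠ ∅),
      (2 : ℤ) * ((-1 : ℤ) ^ (A.card - 1) * (((A ∩ T).card % 2 : ℕ) : ℤ))
        = (-(-1 : ℤ) ^ A.card) * (1 - (-1) ^ (A ∩ T).card) := by
    intro A hA
    simp only [mem_filter, mem_powerset] at hA
    have hc : 1 ≤ A.card := Finset.card_pos.mpr (Finset.nonempty_of_ne_empty hA.2)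
    have hcc : A.card = (A.card - 1) + 1 := by omega
    have hpow : (-1 : ℤ) ^ (A.card - 1) = -(-1 : ℤ) ^ A.card := by
      conv_rhs => rw [hcc]
      rw [pow_succ]
      ring
    rw [hpow, ← two_mul_mod_two]
    ring
  rw [Finset.sum_congr rfl hterm]
  -- extend to full powerset: the empty set contributes 0
  have hext : ∑ A ∈ S.powerset.filter (fun A => A ≠ ∅),
      (-(-1 : ℤ) ^ A.card) * (1 - (-1) ^ (A ∩ T).card)
      = ∑ A ∈ S.powerset, (-(-1 : ℤ) ^ A.card) * (1 - (-1) ^ (A ∩ T).card) := by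
    apply Finset.sum_filter_of_ne
    intro A _ hne hAe
    apply hne
    subst hAe
    simp
  rw [hext]
  have hsplit : ∀ A ∈ S.powerset,
      (-(-1 : ℤ) ^ A.card) * (1 - (-1) ^ (A ∩ T).card)
        = -(-1 : ℤ) ^ A.card + (-1 : ℤ) ^ A.card * (-1) ^ (A ∩ T).card := by
    intro A _; ring
  rw [Finset.sum_congr rfl hsplit]
  rw [Finset.sum_add_distrib, Finset.sum_neg_distrib,
    Finset.sum_powerset_neg_one_pow_card]
  have hSne : ¬ S = ∅ := by
    intro h; exact absurd (h ▸ hS) (by simp)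
  rw [if_neg hSne]
  simp only [neg_zero, zero_add]
  -- now the main sum
  have hprod : ∀ A ∈ S.powerset,
      (-1 : ℤ) ^ A.card * (-1) ^ (A ∩ T).card
        = (∏ i ∈ A, (if i ∈ T then (1 : ℤ) else -1)) * ∏ i ∈ S \ A, (1 : ℤ) := by
    intro A hA
    rw [Finset.prod_const_one, mul_one]
    have h1 : A.filter (fun i => i ∈ T) = A ∩ T := by
      ext i; simp [Finset.mem_inter]
    have hprodval : (∏ i ∈ A, (if i ∈ T then (1 : ℤ) else -1))
        = (-1 : ℤ) ^ (A.filter (fun i => ¬ i ∈ T)).card := by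
      rw [Finset.prod_ite, Finset.prod_const, Finset.prod_const, one_pow, one_mul]
    rw [hprodval, ← pow_add]
    have hsplitc : (A.filter (fun i => i ∈ T)).card
        + (A.filter (fun i => ¬ i ∈ T)).card = A.card :=
      Finset.card_filter_add_card_filter_not _
    rw [h1] at hsplitc
    have hexp : A.card + (A ∩ T).card
        = (A.filter (fun i => ¬ i ∈ T)).card + 2 * (A ∩ T).card := by omega
    rw [hexp, pow_add, pow_mul]
    norm_num
  rw [Finset.sum_congr rfl hprod, ← Finset.prod_add]
  by_cases hST : S ⊆ T
  · rw [if_pos hST]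
    have : ∀ i ∈ S, ((if i ∈ T then (1 : ℤ) else -1) + 1) = 2 := by
      intro i hi
      rw [if_pos (hST hi)]
      norm_num
    rw [Finset.prod_congr rfl this, Finset.prod_const]
    ring
  · rw [if_neg hST, mul_zero]
    obtain ⟨i, hiS, hiT⟩ := Finset.not_subset.mp hST
    apply Finset.prod_eq_zero hiS
    rw [if_neg hiT]
    ring

/-- Sum/product duality for binary variables:
`2^(wt(v)-1) · p_v(e) = ∑_{0 ≠ u ≼ v} (-1)^(wt(u)-1) · s_u(e)` over the integers,
for nonzero `v`. -/
theorem sum_product_duality_p {n : ℕ} (v e : Fin n → ZMod 2) (hv : v ≠ 0) :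
    (2 : ℤ) ^ (wt v - 1) * pFun v e =
      ∑ u ∈ univ.filter (fun u : Fin n → ZMod 2 =>
          u ≠ 0 ∧ ∀ i, u i = 1 → v i = 1),
        (-1 : ℤ) ^ (wt u - 1) * sFun u e := by
  classical
  set S : Finset (Fin n) := univ.filter (fun i => v i = 1) with hSdef
  set T : Finset (Fin n) := univ.filter (fun i => e i = 1) with hTdef
  have hone : ∀ x : ZMod 2, x ≠ 0 → x = 1 := by decide
  -- sFun in terms of supports
  have hsFun : ∀ u : Fin n → ZMod 2,
      sFun u e = (((univ.filter (fun i => u i = 1) ∩ T).card % 2 : ℕ) : ℤ) := by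
    intro u
    unfold sFun
    congr 1
    have h1 : (∑ i ∈ univ.filter (fun i => u i = 1), e i : ZMod 2)
        = ∑ i ∈ (univ.filter (fun i => u i = 1)).filter (fun i => e i = 1), e i :=
      (Finset.sum_filter_of_ne (fun x _ hx => hone _ hx)).symm
    rw [h1]
    have h2 : (univ.filter (fun i => u i = 1)).filter (fun i => e i = 1)
        = univ.filter (fun i => u i = 1) ∩ T := by
      ext i; simp [hTdef]
    rw [h2]
    rw [Finset.sum_congr rfl (fun i hi => by
      simp only [Finset.mem_inter, hTdef, Finset.mem_filter] at hi
      exact hi.2.2)]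
    rw [Finset.sum_const, nsmul_eq_mul, mul_one]
    rw [ZMod.val_natCast]
  -- pFun
  have hpFun : pFun v e = if S ⊆ T then 1 else 0 := by
    unfold pFun
    by_cases hST : S ⊆ T
    · rw [if_pos hST]
      apply Finset.prod_eq_one
      intro i hi
      have hiT : i ∈ T := hST hi
      simp only [hTdef, Finset.mem_filter] at hiT
      rw [hiT.2]
      rfl
    · rw [if_neg hST]
      obtain ⟨i, hiS, hiT⟩ := Finset.not_subset.mp hST
      apply Finset.prod_eq_zero hiS
      have he0 : e i = 0 := by
        by_contra h
        exact hiT (by simp [hTdef, hone _ h])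
      rw [he0]
      rfl
  -- reindex the RHS sum by supports
  have hre : ∑ u ∈ univ.filter (fun u : Fin n → ZMod 2 =>
          u ≠ 0 ∧ ∀ i, u i = 1 → v i = 1),
        (-1 : ℤ) ^ (wt u - 1) * sFun u e
      = ∑ A ∈ S.powerset.filter (fun A => A ≠ ∅),
        (-1 : ℤ) ^ (A.card - 1) * (((A ∩ T).card % 2 : ℕ) : ℤ) := by
    apply Finset.sum_nbij' (i := fun u => univ.filter (fun i => u i = 1))
      (j := fun A => fun i => if i ∈ A then (1 : ZMod 2) else 0)
    · intro u hu
      simp only [Finset.mem_filter, Finset.mem_univ, true_and] at hu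
      simp only [Finset.mem_filter, Finset.mem_powerset]
      constructor
      · intro i hi
        simp only [Finset.mem_filter, Finset.mem_univ, true_and] at hi
        simp only [hSdef, Finset.mem_filter, Finset.mem_univ, true_and]
        exact hu.2 i hi
      · intro h
        apply hu.1
        funext i
        by_contra hne
        have h1 : u i = 1 := hone _ (by simpa using hne)
        have : i ∈ (∅ : Finset (Fin n)) := h ▸ (by simp [h1])
        simp at this
    · intro A hA
      simp only [Finset.mem_filter, Finset.mem_powerset] at hA
      simp only [Finset.mem_filter, Finset.mem_univ, true_and]
      constructor
      · intro h
        obtain ⟨i, hi⟩ := Finset.nonempty_of_ne_empty hA.2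
        have := congrFun h i
        simp only [if_pos hi] at this
        exact one_ne_zero this
      · intro i hi
        by_cases hiA : i ∈ A
        · have := hA.1 hiA
          simpa [hSdef] using this
        · simp [hiA] at hi
    · intro u hu
      funext i
      by_cases h : u i = 1
      · simp [h]
      · have h0 : u i = 0 := by
          by_contra hne
          exact h (hone _ hne)
        simp [h, h0]
    · intro A hA
      ext i
      simp only [Finset.mem_filter, Finset.mem_univ, true_and]
      by_cases h : i ∈ A
      · simp [h]
      · simp [h]
    · intro u hu
      rw [hsFun u]
      rfl
  rw [hre, hpFun]
  have hS : S.Nonempty := by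
    by_contra h
    rw [Finset.not_nonempty_iff_eq_empty] at h
    apply hv
    funext i
    by_contra hne
    have h1 : v i = 1 := hone _ (by simpa using hne)
    have : i ∈ S := by simp [hSdef, h1]
    rw [h] at this
    simp at this
  have hwt : wt v = S.card := rfl
  rw [hwt]
  exact (key S T hS).symm
end

section
/- The embedding map 𝓔_V sending the operator XRP^V_N(p|x|q) := ω^p ∏_i X_i^{x[i]} ∏_{v ∈ V} RP_N(2q[v], v) on n qubits to the XP operator XP_N(p | xVᵀ mod 2 | q) on |V| qubits is a group homomorphism from the group generated by ωI, X_i, and RP_N(2,v) (v ∈ V) to the XP group of precision N on |V| qubits. -/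
open Finset

noncomputable section

/-- `∏_i X_i^{x[i]}`: the Pauli-X string with support `x` on qubits indexed by `ι`. -/
def Xprod {ι : Type*} [Fintype ι] [DecidableEq ι] (x : ι → ZMod 2) :
    Matrix (ι → ZMod 2) (ι → ZMod 2) ℂ :=
  fun e f => if e = f + x then 1 else 0

variable {n : ℕ}

/-- Mod-2 dot product `e·v`, as a natural number in {0,1}. -/
def sdot (e v : Fin n → ZMod 2) : ℕ := ((∑ i, e i * v i : ZMod 2)).val

/-- The operator `XRP^V_N(p|x|q) = ω^p ∏_i X_i^{x[i]} ∏_{v ∈ V} RP_N(2q[v],v)` on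
`n` qubits, where `RP_N(2q,v)` applies phase `ω^{2q·(e·v mod 2)}` to `|e⟩`,
`ω = e^{πi/N}`. -/
def XRPop (N : ℕ) (V : Finset (Fin n → ZMod 2)) (p : ℤ) (x : Fin n → ZMod 2)
    (q : (Fin n → ZMod 2) → ℤ) : Matrix (Fin n → ZMod 2) (Fin n → ZMod 2) ℂ :=
  Complex.exp (Real.pi * Complex.I / N) ^ p •
    (Xprod x * Matrix.diagonal fun e =>
      ∏ v ∈ V, Complex.exp (Real.pi * Complex.I / N) ^ (2 * q v * (sdot e v : ℤ)))

/-- The image `𝓔_V(XRP^V_N(p|x|q)) = XP_N(p | xVᵀ mod 2 | q)`: an XP operator on `|V|`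
qubits (one qubit for each `v ∈ V`), with X-component `v ↦ x·v mod 2` and Z-component
`q`, applying `ω^p ω^{2 e'·q}` phases. -/
def embXP (N : ℕ) (V : Finset (Fin n → ZMod 2)) (p : ℤ) (x : Fin n → ZMod 2)
    (q : (Fin n → ZMod 2) → ℤ) :
    Matrix ({v // v ∈ V} → ZMod 2) ({v // v ∈ V} → ZMod 2) ℂ :=
  Complex.exp (Real.pi * Complex.I / N) ^ p •
    (Xprod (fun v : {v // v ∈ V} => ∑ i, x i * v.1 i) *
      Matrix.diagonal fun e' =>
        Complex.exp (Real.pi * Complex.I / N) ^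
          (2 * ∑ v : {v // v ∈ V}, ((e' v).val : ℤ) * q v.1))

lemma key_zmod (a b : ZMod 2) (c : ℤ) :
    2 * c * ((a + b).val : ℤ) = 2 * c * (b.val : ℤ) + 2 * (-1 : ℤ) ^ b.val * c * (a.val : ℤ) := by
  have ha : a = 0 ∨ a = 1 := by revert a; decide
  have hb : b = 0 ∨ b = 1 := by revert b; decide
  have h00 : ((0 + 0 : ZMod 2)).val = 0 := rfl
  have h01 : ((0 + 1 : ZMod 2)).val = 1 := rfl
  have h10 : ((1 + 0 : ZMod 2)).val = 1 := rfl
  have h11 : ((1 + 1 : ZMod 2)).val = 0 := rfl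
  have h0 : ((0 : ZMod 2)).val = 0 := rfl
  have h1 : ((1 : ZMod 2)).val = 1 := rfl
  rcases ha with ha | ha <;> rcases hb with hb | hb <;> subst ha <;> subst hb <;>
    simp only [h00, h01, h10, h11, h0, h1] <;> push_cast <;> ring

lemma zpow_sum₀ {ω : ℂ} (hω : ω ≠ 0) {α : Type*}
    (s : Finset α) (f : α → ℤ) : ω ^ (∑ a ∈ s, f a) = ∏ a ∈ s, ω ^ f a := by
  classical
  induction s using Finset.cons_induction with
  | empty => simp
  | cons a s ha ih => rw [Finset.sum_cons, Finset.prod_cons, zpow_add₀ hω, ih]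

lemma Xprod_mul_diag {ι : Type*} [Fintype ι] [DecidableEq ι]
    (x : ι → ZMod 2) (d : (ι → ZMod 2) → ℂ) :
    Xprod x * Matrix.diagonal d = fun e f => if e = f + x then d f else 0 := by
  ext e f
  rw [Matrix.mul_diagonal]
  simp [Xprod, ite_mul]

lemma Xprod_mul_diag_mul {ι : Type*} [Fintype ι] [DecidableEq ι]
    (x₁ x₂ : ι → ZMod 2) (d₁ d₂ : (ι → ZMod 2) → ℂ) :
    (Xprod x₁ * Matrix.diagonal d₁) * (Xprod x₂ * Matrix.diagonal d₂) =
      Xprod (x₁ + x₂) * Matrix.diagonal (fun f => d₁ (f + x₂) * d₂ f) := by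
  rw [Xprod_mul_diag, Xprod_mul_diag, Xprod_mul_diag]
  ext e f
  refine Matrix.mul_apply.trans ?_
  simp only [mul_ite, mul_zero, ite_mul, zero_mul]
  rw [Finset.sum_ite_eq' Finset.univ (f + x₂)]
  simp only [Finset.mem_univ, if_true]
  have h : f + x₂ + x₁ = f + (x₁ + x₂) := by abel
  by_cases he : e = f + (x₁ + x₂)
  · rw [if_pos (by rw [h]; exact he), if_pos he]
  · rw [if_neg (by rw [h]; exact he), if_neg he]

lemma smul_assemble {ω : ℂ} (hω : ω ≠ 0) (p₁ p₂ s : ℤ) {ι : Type*} [Fintype ι]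
    [DecidableEq ι] (x₁ x₂ : ι → ZMod 2) (d₁ d₂ d' : (ι → ZMod 2) → ℂ)
    (hd : ∀ f, d₁ (f + x₂) * d₂ f = ω ^ s * d' f) :
    (ω ^ p₁ • (Xprod x₁ * Matrix.diagonal d₁)) * (ω ^ p₂ • (Xprod x₂ * Matrix.diagonal d₂)) =
      ω ^ (p₁ + p₂ + s) • (Xprod (x₁ + x₂) * Matrix.diagonal d') := by
  rw [Matrix.smul_mul, Matrix.mul_smul, smul_smul, Xprod_mul_diag_mul]
  have h1 : (fun f => d₁ (f + x₂) * d₂ f) = (ω ^ s) • d' := funext fun f => hd f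
  rw [h1, Matrix.diagonal_smul, Matrix.mul_smul, smul_smul,
    zpow_add₀ hω, zpow_add₀ hω]

/-- The embedding map `𝓔_V : XRP^V_N(p|x|q) ↦ XP_N(p|xVᵀ|q)` is a group homomorphism:
the composition of two XRP operators is again an XRP operator with explicitly given
components, and `𝓔_V` sends it to the product of the images. -/
theorem embedding_is_group_hom (N : ℕ) (hN : 2 ≤ N) (V : Finset (Fin n → ZMod 2))
    (hV : (0 : Fin n → ZMod 2) ∉ V)
    (p₁ p₂ : ℤ) (x₁ x₂ : Fin n → ZMod 2) (q₁ q₂ : (Fin n → ZMod 2) → ℤ) :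
    (XRPop N V p₁ x₁ q₁ * XRPop N V p₂ x₂ q₂ =
      XRPop N V (p₁ + p₂ + ∑ v ∈ V, 2 * q₁ v * (sdot x₂ v : ℤ)) (x₁ + x₂)
        (fun v => q₂ v + (-1) ^ sdot x₂ v * q₁ v)) ∧
    (embXP N V p₁ x₁ q₁ * embXP N V p₂ x₂ q₂ =
      embXP N V (p₁ + p₂ + ∑ v ∈ V, 2 * q₁ v * (sdot x₂ v : ℤ)) (x₁ + x₂)
        (fun v => q₂ v + (-1) ^ sdot x₂ v * q₁ v)) := by
  have hω : Complex.exp (Real.pi * Complex.I / N) ≠ 0 := Complex.exp_ne_zero _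
  set ω : ℂ := Complex.exp (Real.pi * Complex.I / N) with hωdef
  constructor
  · unfold XRPop
    rw [← hωdef]
    apply smul_assemble hω
    intro f
    rw [← zpow_sum₀ hω, ← zpow_sum₀ hω, ← zpow_sum₀ hω, ← zpow_add₀ hω,
      ← zpow_add₀ hω]
    congr 1
    rw [← Finset.sum_add_distrib, ← Finset.sum_add_distrib]
    refine Finset.sum_congr rfl fun v hv => ?_
    have hs : sdot (f + x₂) v = (((∑ i, f i * v i) + ∑ i, x₂ i * v i : ZMod 2)).val := by
      unfold sdot
      congr 1
      rw [← Finset.sum_add_distrib]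
      exact Finset.sum_congr rfl fun i _ => by rw [Pi.add_apply, add_mul]
    rw [hs]
    have hk := key_zmod (∑ i, f i * v i) (∑ i, x₂ i * v i) (q₁ v)
    unfold sdot
    linear_combination hk
  · unfold embXP
    rw [← hωdef]
    have hx : (fun v : {v // v ∈ V} => ∑ i, (x₁ + x₂) i * v.1 i) =
        (fun v : {v // v ∈ V} => ∑ i, x₁ i * v.1 i) +
        (fun v : {v // v ∈ V} => ∑ i, x₂ i * v.1 i) := by
      funext v
      rw [Pi.add_apply, ← Finset.sum_add_distrib]
      exact Finset.sum_congr rfl fun i _ => by rw [Pi.add_apply, add_mul]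
    rw [hx]
    apply smul_assemble hω
    intro f
    rw [← zpow_add₀ hω, ← zpow_add₀ hω]
    congr 1
    rw [← Finset.sum_coe_sort V (fun v => 2 * q₁ v * (sdot x₂ v : ℤ)),
      Finset.mul_sum, Finset.mul_sum, Finset.mul_sum, ← Finset.sum_add_distrib,
      ← Finset.sum_add_distrib]
    refine Finset.sum_congr rfl fun v _ => ?_
    have hk := key_zmod (f v) (∑ i, x₂ i * v.1 i) (q₁ v)
    have hval : sdot x₂ v.1 = ((∑ i, x₂ i * v.1 i : ZMod 2)).val := rfl
    simp only [Pi.add_apply, hval]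
    linear_combination hk
end
end
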